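/- arXiv:1512.03858 — 2 statements merged into one kernel-verified Lean document; each statement's English description precedes it below -/
import Mathlib

section
/- (Proposition 3.3, meridian disk area) Let g ≥ 2 be an integer and let 0 < ℓ < W(g). Then the tube radius r₀(ℓ) satisfies cosh(r₀(ℓ)) > 2g − 1; consequently the area 2π(cosh(r₀(ℓ)) − 1) of the meridian disk of the maximal solid tube exceeds 2π(2g − 2), the hyperbolic area of a closed surface of genus g. -/
/-- Inverse hyperbolic cosine: `arcosh y = log (y + √(y² - 1))` for `y ≥ 1`. -/
noncomputable def arcosh (y : ℝ) : ℝ := Real.log (y + Real.sqrt (y ^ 2 - 1))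

/-- The function `W` from the paper. -/
noncomputable def W (x : ℝ) : ℝ :=
  (Real.sqrt 3 / (4 * Real.pi)) *
    (arcosh (1 + 1 / (1 + Real.sqrt (1 + (8 * x ^ 2 - 8 * x + 1) ^ 2)))) ^ 2

/-- The function `κ(ℓ) = cosh(√(4πℓ/√3)) - 1`. -/
noncomputable def κ (ℓ : ℝ) : ℝ :=
  Real.cosh (Real.sqrt (4 * Real.pi * ℓ / Real.sqrt 3)) - 1

/-- The tube radius `r₀(ℓ)`, the positive real with
`cosh²(r₀(ℓ)) = (1/2)(√(1 - 2κ(ℓ))/κ(ℓ) + 1)`. -/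
noncomputable def r₀ (ℓ : ℝ) : ℝ :=
  arcosh (Real.sqrt ((1 / 2) * (Real.sqrt (1 - 2 * κ ℓ) / κ ℓ + 1)))

/-!
Since `8g² - 8g + 1 = 2(2g - 1)² - 1`, the claim `cosh r₀ > 2g - 1` says `√(1 - 2κ)/κ > 8g² - 8g + 1`.
The map `κ ↦ √(1 - 2κ)/κ` is decreasing and takes the value `a` exactly at
`κ = 1/(1 + √(1 + a²))`, the positive root of `a²κ² + 2κ - 1`; and `W(g)` is built so that
`ℓ < W(g)` is the same as `κ(ℓ) < 1/(1 + √(1 + a²))` for `a = 8g² - 8g + 1`.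
-/

open Real hiding arcosh

lemma κ_pos {ℓ : ℝ} (hℓ : 0 < ℓ) : 0 < κ ℓ := by
  rw [κ, sub_pos, one_lt_cosh]
  positivity

lemma κ_lt_sub_one_of_lt {ℓ y : ℝ} (hy : 1 < y) (h : ℓ < √3 / (4 * π) * arcosh y ^ 2) :
    κ ℓ < y - 1 := by
  have hA : 0 < arcosh y := Real.arcosh_pos hy
  have hcosh : cosh (arcosh y) = y := Real.cosh_arcosh hy.le
  have hlt : 4 * π * ℓ / √3 < arcosh y ^ 2 :=
    calc 4 * π * ℓ / √3 = 4 * π / √3 * ℓ := by ring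
      _ < 4 * π / √3 * (√3 / (4 * π) * arcosh y ^ 2) := by gcongr
      _ = arcosh y ^ 2 := by field_simp
  have : cosh √(4 * π * ℓ / √3) < cosh (arcosh y) := by
    rw [cosh_lt_cosh, abs_of_nonneg (sqrt_nonneg _), abs_of_pos hA]
    exact (sqrt_lt' hA).mpr hlt
  rw [κ]
  linarith

lemma lt_sqrt_one_sub_two_mul_div {a k : ℝ} (ha : 0 ≤ a) (hk : 0 < k)
    (hks : k < 1 / (1 + √(1 + a ^ 2))) : a < √(1 - 2 * k) / k := by
  set s := 1 + √(1 + a ^ 2)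
  have hs : 2 ≤ s := by linarith [one_le_sqrt.mpr (by nlinarith : (1 : ℝ) ≤ 1 + a ^ 2)]
  have hss : s ^ 2 = a ^ 2 + 2 * s := by nlinarith [sq_sqrt (by positivity : (0 : ℝ) ≤ 1 + a ^ 2)]
  have hsk : s * k < 1 := by rwa [lt_div_iff₀ (by positivity), mul_comm] at hks
  rw [lt_div_iff₀ hk, lt_sqrt (by positivity)]
  have hfactor : 1 - 2 * k - (a * k) ^ 2 = (1 - s * k) * (1 + k * (s - 2)) := by
    rw [mul_pow, show a ^ 2 = s ^ 2 - 2 * s by linarith]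
    ring
  linarith [mul_pos (sub_pos.mpr hsk) (by nlinarith : 0 < 1 + k * (s - 2))]

lemma two_mul_sub_one_sq_lt {x ℓ : ℝ} (hx : 1 ≤ x) (hℓ : 0 < ℓ) (h : ℓ < W x) :
    (2 * x - 1) ^ 2 < 1 / 2 * (√(1 - 2 * κ ℓ) / κ ℓ + 1) := by
  have hy : 1 < 1 + 1 / (1 + √(1 + (8 * x ^ 2 - 8 * x + 1) ^ 2)) :=
    lt_add_of_pos_right 1 (by positivity)
  have hκ := κ_lt_sub_one_of_lt hy h
  rw [add_sub_cancel_left] at hκ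
  have ha := lt_sqrt_one_sub_two_mul_div (by nlinarith) (κ_pos hℓ) hκ
  linarith

theorem meridian_disk_area_general (g : ℕ) (hg : 2 ≤ g) (ℓ : ℝ) (h0 : 0 < ℓ)
    (h1 : ℓ < W g) (r : ℝ)
    (hcosh : (Real.cosh r) ^ 2 = (1 / 2) * (Real.sqrt (1 - 2 * κ ℓ) / κ ℓ + 1)) :
    Real.cosh r > 2 * (g : ℝ) - 1 ∧
    2 * Real.pi * (Real.cosh r - 1) > 2 * Real.pi * (2 * (g : ℝ) - 2) := by
  have hg1 : (1 : ℝ) ≤ g := by exact_mod_cast (by omega : 1 ≤ g)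
  have hsq : (2 * (g : ℝ) - 1) ^ 2 < cosh r ^ 2 := hcosh ▸ two_mul_sub_one_sq_lt hg1 h0 h1
  have hr : 2 * (g : ℝ) - 1 < cosh r := lt_of_pow_lt_pow_left₀ 2 (cosh_pos r).le hsq
  exact ⟨hr, mul_lt_mul_of_pos_left (by linarith) (by positivity)⟩

theorem meridian_disk_area (g : ℕ) (hg : 2 ≤ g) (ℓ : ℝ) (h0 : 0 < ℓ)
    (h1 : ℓ < W g) (r : ℝ) (hr : 0 < r)
    (hcosh : (Real.cosh r) ^ 2 = (1 / 2) * (Real.sqrt (1 - 2 * κ ℓ) / κ ℓ + 1)) :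
    Real.cosh r > 2 * (g : ℝ) - 1 ∧
    2 * Real.pi * (Real.cosh r - 1) > 2 * Real.pi * (2 * (g : ℝ) - 2) :=
  meridian_disk_area_general g hg ℓ h0 h1 r hcosh
end

section
/- (Computational core of Corollary 5.2) Let g ≥ 2 be an integer. There exists ε > 0 such that for all real ℓ with 0 < ℓ < ε and all real θ satisfying |θ| < 2π(g − 1)/(cosh(r₀(ℓ)) − 1), one has |θ|/√ℓ < 4π √(4π/√3) · (g − 1). -/
/-! For small `ℓ` put `s = √(4πℓ/√3)`, so that `κ(ℓ) = cosh s - 1 ≤ s²`. The defining formula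
then gives `cosh² r₀(ℓ) ≥ 1/(2κ(ℓ)) - 1/2 ≥ (1 + 1/(2s))²`, i.e. `cosh r₀(ℓ) - 1 ≥ 1/(2s)`, and
Thurston's bound on `θ` becomes `|θ| < 2π(g - 1) · 2s = 4π √(4π/√3) (g - 1) √ℓ`. -/

open Real hiding arcosh

theorem arcosh_eq_real_arcosh : arcosh = Real.arcosh := rfl

theorem Real.cosh_sub_one_le_sq {x : ℝ} (hx : x ^ 2 ≤ 2) : cosh x - 1 ≤ x ^ 2 := by
  have hexp : exp (x ^ 2 / 2) - 1 ≤ 2 * (x ^ 2 / 2) := by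
    have h := abs_exp_sub_one_le (x := x ^ 2 / 2) (by rw [abs_of_nonneg (by positivity)]; linarith)
    rwa [abs_of_nonneg (sub_nonneg.2 (one_le_exp (by positivity))),
      abs_of_nonneg (by positivity)] at h
  linarith [cosh_le_exp_half_sq x]

theorem inv_two_mul_sub_half_le {k : ℝ} (hk : 0 < k) (hk' : k ≤ 1 / 2) :
    1 / (2 * k) - 1 / 2 ≤ 1 / 2 * (√(1 - 2 * k) / k + 1) := by
  have hsqrt : 1 - 2 * k ≤ √(1 - 2 * k) :=
    (le_sqrt (by linarith) (by linarith)).2 (by nlinarith)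
  have hdiv : (1 - 2 * k) / k ≤ √(1 - 2 * k) / k := by gcongr
  have h1 : (1 - 2 * k) / k = 1 / k - 2 := by field_simp
  have h2 : 1 / (2 * k) = 1 / 2 * (1 / k) := by ring
  linarith

theorem one_add_inv_two_mul_sq_le {s k : ℝ} (hs : 0 < s) (hs' : s ≤ 1 / 10) (hk : 0 < k)
    (hks : k ≤ s ^ 2) : (1 + 1 / (2 * s)) ^ 2 ≤ 1 / (2 * k) - 1 / 2 := by
  have h1 : 1 / (2 * s ^ 2) ≤ 1 / (2 * k) := by gcongr
  have h2 : (1 + 1 / (2 * s)) ^ 2 ≤ 1 / (2 * s ^ 2) - 1 / 2 := by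
    rw [← sub_nonneg]
    have hgap : 1 / (2 * s ^ 2) - 1 / 2 - (1 + 1 / (2 * s)) ^ 2
        = (1 - 4 * s - 6 * s ^ 2) / (4 * s ^ 2) := by
      field_simp; ring
    rw [hgap]
    apply div_nonneg <;> nlinarith
  linarith

theorem one_add_inv_two_mul_le_cosh_arcosh {s k : ℝ} (hs : 0 < s) (hs' : s ≤ 1 / 10)
    (hk : 0 < k) (hks : k ≤ s ^ 2) :
    1 + 1 / (2 * s) ≤ cosh (arcosh √(1 / 2 * (√(1 - 2 * k) / k + 1))) := by
  have hsq : (1 + 1 / (2 * s)) ^ 2 ≤ 1 / 2 * (√(1 - 2 * k) / k + 1) :=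
    (one_add_inv_two_mul_sq_le hs hs' hk hks).trans
      (inv_two_mul_sub_half_le hk (by nlinarith))
  have hle : 1 + 1 / (2 * s) ≤ √(1 / 2 * (√(1 - 2 * k) / k + 1)) :=
    (le_sqrt (by positivity) ((sq_nonneg _).trans hsq)).2 hsq
  rw [arcosh_eq_real_arcosh, Real.cosh_arcosh ((le_add_of_nonneg_right (by positivity)).trans hle)]
  exact hle

theorem inv_two_mul_le_cosh_r₀_sub_one {ℓ : ℝ} (hℓ : 0 < ℓ) (hℓε : ℓ < √3 / (400 * π)) :
    1 / (2 * (√(4 * π / √3) * √ℓ)) ≤ cosh (r₀ ℓ) - 1 := by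
  set s := √(4 * π / √3) * √ℓ with hs_def
  have hs_eq : s = √(4 * π * ℓ / √3) := by
    rw [hs_def, ← sqrt_mul (by positivity)]; ring_nf
  have hs : 0 < s := by positivity
  have hs_sq : s ^ 2 = 4 * π * ℓ / √3 := by rw [hs_eq, sq_sqrt (by positivity)]
  have hs_sq_le : s ^ 2 ≤ 1 / 100 := by
    rw [hs_sq, div_le_iff₀ (by positivity)]
    rw [lt_div_iff₀ (by positivity)] at hℓε
    linarith
  have hκ : κ ℓ = cosh s - 1 := by rw [κ, hs_eq]
  have hκ_pos : 0 < κ ℓ := by rw [hκ, sub_pos, one_lt_cosh]; exact hs.ne'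
  have hκ_le : κ ℓ ≤ s ^ 2 := hκ ▸ cosh_sub_one_le_sq (by linarith)
  have hcosh := one_add_inv_two_mul_le_cosh_arcosh hs (by nlinarith) hκ_pos hκ_le
  rw [r₀]
  linarith

theorem rotation_ratio_upper_bound_general (g : ℕ) :
    ∃ ε > (0 : ℝ), ∀ ℓ θ : ℝ, 0 < ℓ → ℓ < ε →
      |θ| < 2 * Real.pi * ((g : ℝ) - 1) / (Real.cosh (r₀ ℓ) - 1) →
      |θ| / Real.sqrt ℓ <
        4 * Real.pi * Real.sqrt (4 * Real.pi / Real.sqrt 3) * ((g : ℝ) - 1) := by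
  refine ⟨√3 / (400 * π), by positivity, fun ℓ θ hℓ hℓε hθ => ?_⟩
  have hC := inv_two_mul_le_cosh_r₀_sub_one hℓ hℓε
  have hC_pos : 0 < cosh (r₀ ℓ) - 1 := lt_of_lt_of_le (by positivity) hC
  have hg : 0 ≤ 2 * π * ((g : ℝ) - 1) :=
    ((div_pos_iff_of_pos_right hC_pos).1 ((abs_nonneg θ).trans_lt hθ)).le
  rw [div_lt_iff₀ (sqrt_pos.2 hℓ)]
  calc |θ| < 2 * π * ((g : ℝ) - 1) / (cosh (r₀ ℓ) - 1) := hθ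
    _ ≤ 2 * π * ((g : ℝ) - 1) / (1 / (2 * (√(4 * π / √3) * √ℓ))) :=
      div_le_div_of_nonneg_left hg (by positivity) hC
    _ = 4 * π * √(4 * π / √3) * ((g : ℝ) - 1) * √ℓ := by
      rw [div_div_eq_mul_div, div_one]; ring

theorem rotation_ratio_upper_bound (g : ℕ) (hg : 2 ≤ g) :
    ∃ ε > (0 : ℝ), ∀ ℓ θ : ℝ, 0 < ℓ → ℓ < ε →
      |θ| < 2 * Real.pi * ((g : ℝ) - 1) / (Real.cosh (r₀ ℓ) - 1) →
      |θ| / Real.sqrt ℓ <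
        4 * Real.pi * Real.sqrt (4 * Real.pi / Real.sqrt 3) * ((g : ℝ) - 1) :=
  rotation_ratio_upper_bound_general g
end
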